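/- Let B be the closed unit ball in ℝ^d. If f is a measurable function supported in B with ∫_B f(y) dy = 0 and f ∈ L log log L(B), then f ∈ H^log(ℝ^d), i.e. ∫_{ℝ^d} Ψ(x, M_φ(f)(x)) dx < ∞. -/

import Mathlib

open MeasureTheory Metric Real ENNReal NNReal

/-- `log⁺ u = max (log u) 0`. -/
noncomputable def logPlus (u : ℝ) : ℝ := max (Real.log u) 0

/-- `Ψ(x,t) = t / (log(e+t) + log(e+|x|))`. -/
noncomputable def PsiFun {d : ℕ} (x : EuclideanSpace ℝ (Fin d)) (t : ℝ) : ℝ :=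
  t / (Real.log (Real.exp 1 + t) + Real.log (Real.exp 1 + ‖x‖))

/-- The dilate `φ_ε(x) = ε^{-d} φ(x/ε)` convolved with `f`, evaluated at `x`. -/
noncomputable def convPhi {d : ℕ} (φ : EuclideanSpace ℝ (Fin d) → ℝ)
    (f : EuclideanSpace ℝ (Fin d) → ℂ) (ε : ℝ) (x : EuclideanSpace ℝ (Fin d)) : ℂ :=
  ∫ y, ((ε ^ d)⁻¹ * φ (ε⁻¹ • (x - y))) • f y

/-- The smooth maximal function `M_φ(f)(x) = sup_{ε>0} |(f * φ_ε)(x)|`. -/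
noncomputable def MPhi {d : ℕ} (φ : EuclideanSpace ℝ (Fin d) → ℝ)
    (f : EuclideanSpace ℝ (Fin d) → ℂ) (x : EuclideanSpace ℝ (Fin d)) : ℝ≥0∞ :=
  ⨆ (ε : ℝ) (_ : 0 < ε), (‖convPhi φ f ε x‖₊ : ℝ≥0∞)


noncomputable def MopE {d : ℕ} (g : EuclideanSpace ℝ (Fin d) → ℝ≥0∞)
    (x : EuclideanSpace ℝ (Fin d)) : ℝ≥0∞ :=
  ⨆ (q : ℚ) (_ : 0 < q), ((ENNReal.ofReal (q : ℝ)) ^ d)⁻¹ * ∫⁻ y in Metric.ball x (q : ℝ), g y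

noncomputable def Cweak (d : ℕ) : ℝ≥0∞ :=
  ENNReal.ofReal (4 ^ d) * volume (Metric.ball (0 : EuclideanSpace ℝ (Fin d)) 1)

lemma loge2k_pos (k : ℕ) : 0 < Real.log (Real.exp 1 + 2 ^ k) := by
  have hbig : (1:ℝ) < Real.exp 1 + 2 ^ k := by
    have h1 := Real.exp_pos 1
    have h2 : (0:ℝ) < 2 ^ k := by positivity
    have h3 : (1:ℝ) ≤ Real.exp 1 := by
      have := Real.add_one_le_exp (1:ℝ)
      linarith
    linarith
  exact Real.log_pos hbig


lemma measurable_MopE {d : ℕ} {g : EuclideanSpace ℝ (Fin d) → ℝ≥0∞} (hg : Measurable g) :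
    Measurable (MopE g) := by
  apply Measurable.iSup
  intro q
  apply Measurable.iSup
  intro _
  apply Measurable.const_mul
  have : Measurable (Function.uncurry fun x y =>
      (Metric.ball x (q : ℝ)).indicator g y) := by
    have hs : MeasurableSet {p : EuclideanSpace ℝ (Fin d) × EuclideanSpace ℝ (Fin d) |
        dist p.2 p.1 < (q : ℝ)} :=
      measurableSet_lt (measurable_dist.comp (measurable_snd.prodMk measurable_fst))
        measurable_const
    have : (Function.uncurry fun x y => (Metric.ball x (q : ℝ)).indicator g y)
        = {p : EuclideanSpace ℝ (Fin d) × EuclideanSpace ℝ (Fin d) |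
            dist p.2 p.1 < (q : ℝ)}.indicator (fun p => g p.2) := by
      ext p
      simp only [Function.uncurry, Set.indicator, Metric.mem_ball, Set.mem_setOf_eq]
    rw [this]
    exact (hg.comp measurable_snd).indicator hs
  have h2 : ∀ x, ∫⁻ y in Metric.ball x (q : ℝ), g y
      = ∫⁻ y, (Metric.ball x (q : ℝ)).indicator g y := by
    intro x
    rw [lintegral_indicator measurableSet_ball]
  simp only [h2]
  exact Measurable.lintegral_prod_right' this

lemma Cweak_ne_top (d : ℕ) : Cweak d ≠ ∞ :=
  ENNReal.mul_ne_top ofReal_ne_top measure_ball_lt_top.ne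

lemma Cweak_ne_zero {d : ℕ} (hd : 0 < d) : Cweak d ≠ 0 := by
  haveI : Nontrivial (EuclideanSpace ℝ (Fin d)) :=
    Module.nontrivial_of_finrank_pos (R := ℝ) (by rwa [finrank_euclideanSpace_fin])
  rw [Cweak]
  intro h
  rcases mul_eq_zero.1 h with h | h
  · rw [ENNReal.ofReal_eq_zero] at h
    nlinarith [pow_pos (by norm_num : (0:ℝ) < 4) d]
  · exact (measure_ball_pos volume 0 one_pos).ne' h

lemma MopE_weak {d : ℕ} (hd : 0 < d) (g : EuclideanSpace ℝ (Fin d) → ℝ≥0∞)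
    {t : ℝ≥0∞} (ht : t ≠ 0) (ht' : t ≠ ∞) :
    volume {x | t < MopE g x} ≤ Cweak d * (∫⁻ y, g y) / t := by
  haveI : Nontrivial (EuclideanSpace ℝ (Fin d)) :=
    Module.nontrivial_of_finrank_pos (R := ℝ) (by rwa [finrank_euclideanSpace_fin])
  set I := ∫⁻ y, g y with hI
  by_cases hItop : I = ∞
  · have : Cweak d * I / t = ∞ := by
      rw [hItop, ENNReal.mul_top (Cweak_ne_zero hd), ENNReal.div_eq_top]
      exact Or.inr ⟨rfl, ht'⟩
    simp [this]
  set S := {x | t < MopE g x} with hS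
  set R : ℝ := max 1 ((I / t).toReal) with hR
  have hIt_ne : I / t ≠ ∞ := by
    simp only [ne_eq, ENNReal.div_eq_top]
    push_neg
    exact ⟨fun _ => ht, fun h => absurd h hItop⟩
  have key : ∀ z : S, ∃ q : ℚ, 0 < q ∧ (q : ℝ) ≤ R ∧
      t * ENNReal.ofReal ((q : ℝ) ^ d) <
        ∫⁻ y in Metric.ball (z : EuclideanSpace ℝ (Fin d)) (q : ℝ), g y := by
    rintro ⟨z, hz⟩
    have : t < MopE g z := hz
    rw [MopE, lt_iSup_iff] at this
    obtain ⟨q, hq⟩ := this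
    rw [lt_iSup_iff] at hq
    obtain ⟨hq0, hq⟩ := hq
    set c : ℝ≥0∞ := (ENNReal.ofReal (q : ℝ)) ^ d with hc
    have hc0 : c ≠ 0 := by
      apply pow_ne_zero
      simp only [ne_eq, ENNReal.ofReal_eq_zero, not_le]
      exact_mod_cast hq0
    have hctop : c ≠ ∞ := pow_ne_top ofReal_ne_top
    have hmul : t * c < ∫⁻ y in Metric.ball z (q : ℝ), g y := by
      have := ENNReal.mul_lt_mul_right (a := c) hc0 hctop hq
      calc t * c = c * t := mul_comm _ _
        _ < c * (c⁻¹ * ∫⁻ y in Metric.ball z (q : ℝ), g y) := this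
        _ = ∫⁻ y in Metric.ball z (q : ℝ), g y := by
            rw [← mul_assoc, ENNReal.mul_inv_cancel hc0 hctop, one_mul]
    have hcr : c = ENNReal.ofReal ((q : ℝ) ^ d) := by
      rw [hc, ← ENNReal.ofReal_pow (by positivity)]
    refine ⟨q, hq0, ?_, by rwa [← hcr]⟩
    have hlt : t * c < I := lt_of_lt_of_le hmul (setLIntegral_le_lintegral _ _)
    have hcI : c < I / t := by
      rw [ENNReal.lt_div_iff_mul_lt (Or.inl ht) (Or.inl ht'), mul_comm]
      exact hlt
    have hqd : (q : ℝ) ^ d < (I / t).toReal := by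
      rw [hcr, ENNReal.ofReal_lt_iff_lt_toReal (by positivity) hIt_ne] at hcI
      exact hcI
    rcases le_or_gt (q : ℝ) 1 with h | h
    · exact le_max_of_le_left h
    · refine le_max_of_le_right ?_
      calc (q : ℝ) ≤ (q : ℝ) ^ d := le_self_pow₀ h.le hd.ne'
        _ ≤ (I / t).toReal := hqd.le
  choose qf hqf0 hqfR hqflt using key
  obtain ⟨u, -, hdisj, hcov⟩ :=
    Vitali.exists_disjoint_subfamily_covering_enlargement_closedBall (Set.univ : Set S)
      (fun z => (z : EuclideanSpace ℝ (Fin d))) (fun z => (qf z : ℝ)) R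
      (fun a _ => hqfR a) 4 (by norm_num)
  have hucnt : u.Countable := by
    apply Set.PairwiseDisjoint.countable_of_nonempty_interior hdisj
    intro z _
    rw [interior_closedBall _ (by exact_mod_cast (hqf0 z).ne')]
    exact ⟨z, by simp [mem_ball, Rat.cast_pos.2 (hqf0 z)]⟩
  have hcov' : S ⊆ ⋃ b ∈ u,
      Metric.closedBall ((b : S) : EuclideanSpace ℝ (Fin d)) (4 * (qf b : ℝ)) := by
    intro x hx
    obtain ⟨b, hb, hsub⟩ := hcov ⟨x, hx⟩ (Set.mem_univ _)
    exact Set.mem_biUnion hb (hsub (mem_closedBall_self (by exact_mod_cast (hqf0 ⟨x, hx⟩).le)))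
  haveI : Countable ↥u := hucnt.to_subtype
  have step1 : volume S ≤ ∑' b : u,
      volume (Metric.closedBall ((b : S) : EuclideanSpace ℝ (Fin d)) (4 * (qf b : ℝ))) :=
    le_trans (measure_mono hcov') (measure_biUnion_le _ hucnt _)
  have step2 : ∀ b : u,
      volume (Metric.closedBall ((b : S) : EuclideanSpace ℝ (Fin d)) (4 * (qf b : ℝ)))
      ≤ Cweak d * ((∫⁻ y in Metric.ball ((b : S) : EuclideanSpace ℝ (Fin d)) (qf (b : S) : ℝ), g y) / t) := by
    intro b
    have h0 : (0:ℝ) ≤ 4 * (qf b : ℝ) :=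
      mul_nonneg (by norm_num) (by exact_mod_cast (hqf0 b).le)
    have hkey : ENNReal.ofReal ((qf (b:S) : ℝ) ^ d)
        ≤ (∫⁻ y in Metric.ball ((b : S) : EuclideanSpace ℝ (Fin d)) (qf (b:S) : ℝ), g y) / t := by
      rw [ENNReal.le_div_iff_mul_le (Or.inl ht) (Or.inl ht'), mul_comm]
      exact (hqflt b).le
    calc volume (Metric.closedBall ((b : S) : EuclideanSpace ℝ (Fin d)) (4 * (qf b : ℝ)))
        = ENNReal.ofReal (4 ^ d) * ENNReal.ofReal ((qf (b:S) : ℝ) ^ d)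
            * volume (Metric.ball (0 : EuclideanSpace ℝ (Fin d)) 1) := by
          rw [Measure.addHaar_closedBall _ _ h0, finrank_euclideanSpace_fin, mul_pow,
            ENNReal.ofReal_mul (by positivity)]
      _ ≤ ENNReal.ofReal (4 ^ d)
            * ((∫⁻ y in Metric.ball ((b : S) : EuclideanSpace ℝ (Fin d)) (qf (b:S) : ℝ), g y) / t)
            * volume (Metric.ball (0 : EuclideanSpace ℝ (Fin d)) 1) := by gcongr
      _ = Cweak d * ((∫⁻ y in Metric.ball ((b : S) : EuclideanSpace ℝ (Fin d)) (qf (b:S) : ℝ), g y) / t) := by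
          rw [Cweak]; ring
  have step3 : ∑' b : u, (∫⁻ y in Metric.ball ((b : S) : EuclideanSpace ℝ (Fin d)) (qf (b:S) : ℝ), g y) ≤ I := by
    have hpair : Pairwise (Function.onFun Disjoint
        fun b : u => Metric.ball ((b : S) : EuclideanSpace ℝ (Fin d)) (qf (b:S) : ℝ)) := by
      intro i j hij
      have : (i : S) ≠ (j : S) := fun h => hij (Subtype.ext h)
      exact ((hdisj i.2 j.2 this).mono ball_subset_closedBall ball_subset_closedBall)
    rw [← lintegral_iUnion (fun b => measurableSet_ball) hpair]
    exact setLIntegral_le_lintegral _ _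
  calc volume S ≤ ∑' b : u,
      volume (Metric.closedBall ((b : S) : EuclideanSpace ℝ (Fin d)) (4 * (qf b : ℝ))) := step1
    _ ≤ ∑' b : u, Cweak d * ((∫⁻ y in Metric.ball ((b : S) : EuclideanSpace ℝ (Fin d)) (qf (b:S) : ℝ), g y) / t) :=
        ENNReal.tsum_le_tsum step2
    _ = Cweak d * (∑' b : u, (∫⁻ y in Metric.ball ((b : S) : EuclideanSpace ℝ (Fin d)) (qf (b:S) : ℝ), g y)) / t := by
        simp only [div_eq_mul_inv, ENNReal.tsum_mul_left, ENNReal.tsum_mul_right, mul_assoc]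
    _ ≤ Cweak d * I / t := by gcongr

lemma MopE_add_le {d : ℕ} (g₁ g₂ : EuclideanSpace ℝ (Fin d) → ℝ≥0∞) (hg₁ : Measurable g₁)
    (x : EuclideanSpace ℝ (Fin d)) :
    MopE (fun y => g₁ y + g₂ y) x ≤ MopE g₁ x + MopE g₂ x := by
  rw [MopE]
  apply iSup₂_le
  intro q hq
  rw [lintegral_add_left hg₁, mul_add]
  gcongr
  · exact le_iSup₂ (f := fun (q : ℚ) (_ : 0 < q) =>
      ((ENNReal.ofReal (q : ℝ)) ^ d)⁻¹ * ∫⁻ y in Metric.ball x (q : ℝ), g₁ y) q hq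
  · exact le_iSup₂ (f := fun (q : ℚ) (_ : 0 < q) =>
      ((ENNReal.ofReal (q : ℝ)) ^ d)⁻¹ * ∫⁻ y in Metric.ball x (q : ℝ), g₂ y) q hq

lemma MopE_le_of_le_const {d : ℕ} (hd : 0 < d) {g : EuclideanSpace ℝ (Fin d) → ℝ≥0∞}
    {s : ℝ≥0∞} (hg : ∀ y, g y ≤ s) (x : EuclideanSpace ℝ (Fin d)) :
    MopE g x ≤ s * volume (Metric.ball (0 : EuclideanSpace ℝ (Fin d)) 1) := by
  haveI : Nontrivial (EuclideanSpace ℝ (Fin d)) :=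
    Module.nontrivial_of_finrank_pos (R := ℝ) (by rwa [finrank_euclideanSpace_fin])
  apply iSup₂_le
  intro q hq
  set c : ℝ≥0∞ := (ENNReal.ofReal (q : ℝ)) ^ d with hc
  have hc0 : c ≠ 0 := by
    apply pow_ne_zero
    simp only [ne_eq, ENNReal.ofReal_eq_zero, not_le]
    exact_mod_cast hq
  have hctop : c ≠ ∞ := pow_ne_top ofReal_ne_top
  calc c⁻¹ * ∫⁻ y in Metric.ball x (q : ℝ), g y
      ≤ c⁻¹ * (s * volume (Metric.ball x (q : ℝ))) := by
        gcongr
        calc ∫⁻ y in Metric.ball x (q : ℝ), g y ≤ ∫⁻ _ in Metric.ball x (q : ℝ), s :=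
              setLIntegral_mono' measurableSet_ball (fun y _ => hg y)
          _ = s * volume (Metric.ball x (q : ℝ)) := setLIntegral_const _ _
    _ = s * volume (Metric.ball (0 : EuclideanSpace ℝ (Fin d)) 1) := by
        have hcr : ENNReal.ofReal ((q:ℝ) ^ d) = c := by
          rw [hc, ← ENNReal.ofReal_pow (by exact_mod_cast hq.le)]
        rw [Measure.addHaar_ball _ _ (by exact_mod_cast hq.le), finrank_euclideanSpace_fin,
          hcr, mul_left_comm, ← mul_assoc c⁻¹ c, ENNReal.inv_mul_cancel hc0 hctop, one_mul]

lemma MopE_weak_refined {d : ℕ} (hd : 0 < d) {g : EuclideanSpace ℝ (Fin d) → ℝ≥0∞}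
    (hg : Measurable g) {t : ℝ≥0∞} (ht : t ≠ 0) (ht' : t ≠ ∞) :
    volume {x | t < MopE g x}
      ≤ Cweak d * (∫⁻ y, (if t / (2 * volume (Metric.ball (0 : EuclideanSpace ℝ (Fin d)) 1)) < g y
          then g y else 0)) / (t / 2) := by
  haveI : Nontrivial (EuclideanSpace ℝ (Fin d)) :=
    Module.nontrivial_of_finrank_pos (R := ℝ) (by rwa [finrank_euclideanSpace_fin])
  set V := volume (Metric.ball (0 : EuclideanSpace ℝ (Fin d)) 1) with hV
  have hV0 : V ≠ 0 := (measure_ball_pos volume 0 one_pos).ne'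
  have hVtop : V ≠ ∞ := measure_ball_lt_top.ne
  set s := t / (2 * V) with hs
  set G : EuclideanSpace ℝ (Fin d) → ℝ≥0∞ := fun y => if s < g y then g y else 0 with hG
  set Gs : EuclideanSpace ℝ (Fin d) → ℝ≥0∞ := fun y => if s < g y then 0 else g y with hGs
  have hGmeas : Measurable G :=
    Measurable.ite (measurableSet_lt measurable_const hg) hg measurable_const
  have hsum : ∀ y, g y = G y + Gs y := by
    intro y
    by_cases h : s < g y <;> simp [hG, hGs, h]
  have hsV : s * V ≤ t / 2 := by
    rw [hs, div_eq_mul_inv, ENNReal.mul_inv (Or.inl (by norm_num)) (Or.inl (by norm_num)),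
      mul_assoc, mul_assoc, ENNReal.inv_mul_cancel hV0 hVtop, mul_one, ← div_eq_mul_inv]
  have hsmall : ∀ x, MopE g x ≤ MopE G x + t / 2 := by
    intro x
    have h1 : MopE g x = MopE (fun y => G y + Gs y) x := by
      congr 1
      funext y
      exact hsum y
    rw [h1]
    refine le_trans (MopE_add_le _ _ hGmeas x) ?_
    gcongr
    refine le_trans (MopE_le_of_le_const hd (s := s) ?_ x) hsV
    intro y
    by_cases h : s < g y <;> simp [hGs, h]
    exact le_of_not_gt h
  have hsub : {x | t < MopE g x} ⊆ {x | t / 2 < MopE G x} := by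
    intro x hx
    by_contra h
    rw [Set.mem_setOf_eq, not_lt] at h
    have : MopE g x ≤ t := by
      calc MopE g x ≤ MopE G x + t / 2 := hsmall x
        _ ≤ t / 2 + t / 2 := by gcongr
        _ = t := ENNReal.add_halves t
    exact absurd (lt_of_lt_of_le hx this) (lt_irrefl t)
  calc volume {x | t < MopE g x} ≤ volume {x | t / 2 < MopE G x} := measure_mono hsub
    _ ≤ Cweak d * (∫⁻ y, G y) / (t / 2) :=
        MopE_weak hd G (by simp [ENNReal.div_ne_zero, ht]) (by
          simp only [ne_eq, ENNReal.div_eq_top, not_or, not_and_or]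
          exact ⟨Or.inr (by norm_num), Or.inl ht'⟩)

lemma MPhi_le_MopE {d : ℕ} (φ : EuclideanSpace ℝ (Fin d) → ℝ)
    (f : EuclideanSpace ℝ (Fin d) → ℂ) (P : ℝ) (hP : 0 < P)
    (hφ_bound : ∀ z, |φ z| ≤ P)
    (hφ_supp : Function.support φ ⊆ Metric.closedBall 0 1)
    (x : EuclideanSpace ℝ (Fin d)) :
    MPhi φ f x ≤ ENNReal.ofReal (2 ^ d * P) * MopE (fun y => (‖f y‖₊ : ℝ≥0∞)) x := by
  apply iSup₂_le
  intro ε hε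
  obtain ⟨q, hq1, hq2⟩ := exists_rat_btwn (lt_two_mul_self hε)
  have hq0 : (0:ℝ) < (q:ℝ) := hε.trans hq1
  have hq0' : (0:ℚ) < q := by exact_mod_cast hq0
  have key1 : (‖convPhi φ f ε x‖₊ : ℝ≥0∞)
      ≤ ENNReal.ofReal (ε⁻¹ ^ d * P) * ∫⁻ y in Metric.closedBall x ε, (‖f y‖₊ : ℝ≥0∞) := by
    calc (‖convPhi φ f ε x‖₊ : ℝ≥0∞) ≤ ∫⁻ y, ‖((ε ^ d)⁻¹ * φ (ε⁻¹ • (x - y))) • f y‖₊ :=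
        enorm_integral_le_lintegral_enorm _
      _ ≤ ∫⁻ y, (Metric.closedBall x ε).indicator
            (fun y => ENNReal.ofReal (ε⁻¹ ^ d * P) * (‖f y‖₊ : ℝ≥0∞)) y := by
          apply lintegral_mono
          intro y
          by_cases hy : y ∈ Metric.closedBall x ε
          · rw [Set.indicator_of_mem hy]
            show (‖((ε ^ d)⁻¹ * φ (ε⁻¹ • (x - y))) • f y‖₊ : ℝ≥0∞)
              ≤ ENNReal.ofReal (ε⁻¹ ^ d * P) * ‖f y‖₊
            rw [nnnorm_smul, ENNReal.coe_mul]
            gcongr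
            rw [← ENNReal.ofReal_coe_nnreal, coe_nnnorm]
            apply ENNReal.ofReal_le_ofReal
            rw [norm_mul]
            have h1 : ‖(ε ^ d)⁻¹‖ = ε⁻¹ ^ d := by
              rw [norm_inv, norm_pow, Real.norm_of_nonneg hε.le, inv_pow]
            rw [h1]
            gcongr
            rw [Real.norm_eq_abs]; exact hφ_bound _
          · rw [Set.indicator_of_notMem hy]
            have hφ0 : φ (ε⁻¹ • (x - y)) = 0 := by
              by_contra h
              have hmem := hφ_supp h
              rw [Metric.mem_closedBall, dist_zero_right, norm_smul, norm_inv,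
                Real.norm_of_nonneg hε.le] at hmem
              have hxy : ε < ‖x - y‖ := by
                rw [Metric.mem_closedBall, dist_eq_norm, norm_sub_rev] at hy
                exact lt_of_not_ge hy
              have h2 : 1 < ε⁻¹ * ‖x - y‖ := by
                rw [← div_eq_inv_mul, lt_div_iff₀ hε]
                linarith
              linarith
            simp [hφ0]
      _ = ENNReal.ofReal (ε⁻¹ ^ d * P) * ∫⁻ y in Metric.closedBall x ε, (‖f y‖₊ : ℝ≥0∞) := by
          rw [lintegral_indicator measurableSet_closedBall,
            lintegral_const_mul' _ _ ofReal_ne_top]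
  have key2 : ENNReal.ofReal (ε⁻¹ ^ d * P)
      ≤ ENNReal.ofReal (2 ^ d * P) * ((ENNReal.ofReal (q : ℝ)) ^ d)⁻¹ := by
    have hre : ε⁻¹ ^ d * P ≤ (2 ^ d * P) * ((q:ℝ) ^ d)⁻¹ := by
      have hεinv : ε⁻¹ ≤ 2 / (q:ℝ) := by
        have h : (q:ℝ)/2 ≤ ε := by linarith
        calc ε⁻¹ ≤ ((q:ℝ)/2)⁻¹ := inv_anti₀ (by positivity) h
          _ = 2/(q:ℝ) := by rw [inv_div]
      calc ε⁻¹ ^ d * P ≤ (2 / (q:ℝ)) ^ d * P := by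
            gcongr
        _ = (2 ^ d * P) * ((q:ℝ) ^ d)⁻¹ := by
            rw [div_pow]; field_simp
    calc ENNReal.ofReal (ε⁻¹ ^ d * P) ≤ ENNReal.ofReal ((2 ^ d * P) * ((q:ℝ) ^ d)⁻¹) :=
          ENNReal.ofReal_le_ofReal hre
      _ = ENNReal.ofReal (2 ^ d * P) * ((ENNReal.ofReal (q : ℝ)) ^ d)⁻¹ := by
          rw [ENNReal.ofReal_mul (by positivity), ENNReal.ofReal_inv_of_pos (by positivity),
            ENNReal.ofReal_pow hq0.le]
  calc (‖convPhi φ f ε x‖₊ : ℝ≥0∞)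
      ≤ ENNReal.ofReal (ε⁻¹ ^ d * P) * ∫⁻ y in Metric.closedBall x ε, (‖f y‖₊ : ℝ≥0∞) := key1
    _ ≤ (ENNReal.ofReal (2 ^ d * P) * ((ENNReal.ofReal (q : ℝ)) ^ d)⁻¹)
          * ∫⁻ y in Metric.ball x (q:ℝ), (‖f y‖₊ : ℝ≥0∞) := by
        exact mul_le_mul' key2 (lintegral_mono_set (fun y hy =>
          Metric.mem_ball.2 (lt_of_le_of_lt (Metric.mem_closedBall.1 hy) hq1)))
    _ = ENNReal.ofReal (2 ^ d * P) * (((ENNReal.ofReal (q : ℝ)) ^ d)⁻¹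
          * ∫⁻ y in Metric.ball x (q:ℝ), (‖f y‖₊ : ℝ≥0∞)) := by rw [mul_assoc]
    _ ≤ ENNReal.ofReal (2 ^ d * P) * MopE (fun y => (‖f y‖₊ : ℝ≥0∞)) x := by
        gcongr
        exact le_iSup₂ (f := fun (q : ℚ) (_ : 0 < q) =>
          ((ENNReal.ofReal (q : ℝ)) ^ d)⁻¹ * ∫⁻ y in Metric.ball x (q : ℝ), (‖f y‖₊ : ℝ≥0∞))
          q hq0'

lemma MPhi_far_bound {d : ℕ} (φ : EuclideanSpace ℝ (Fin d) → ℝ)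
    (f : EuclideanSpace ℝ (Fin d) → ℂ)
    (hφc : Continuous φ)
    (hφ_supp : Function.support φ ⊆ Metric.closedBall 0 1)
    (L : ℝ≥0) (hL : LipschitzWith L φ)
    (hint : Integrable f)
    (hsupp : ∀ y, y ∉ Metric.closedBall (0 : EuclideanSpace ℝ (Fin d)) 1 → f y = 0)
    (hmean : ∫ y in Metric.closedBall (0 : EuclideanSpace ℝ (Fin d)) 1, f y = 0)
    {x : EuclideanSpace ℝ (Fin d)} (hx : 3 ≤ ‖x‖) :
    MPhi φ f x ≤ ENNReal.ofReal ((L : ℝ) * (∫ y, ‖f y‖) * (2 / (1 + ‖x‖)) ^ (d + 1)) := by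
  have hmean0 : ∫ y, f y = 0 := by
    rw [← MeasureTheory.setIntegral_eq_integral_of_forall_compl_eq_zero
      (fun y hy => hsupp y hy)]
    exact hmean
  apply iSup₂_le
  intro ε hε
  rcases lt_or_ge ε (‖x‖ - 1) with hcase | hcase
  · -- small ε : the convolution vanishes
    have hzero : convPhi φ f ε x = 0 := by
      rw [convPhi]
      have : ∀ y, ((ε ^ d)⁻¹ * φ (ε⁻¹ • (x - y))) • f y = 0 := by
        intro y
        by_cases hfy : f y = 0
        · rw [hfy, smul_zero]
        · have hy : y ∈ Metric.closedBall (0 : EuclideanSpace ℝ (Fin d)) 1 := by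
            by_contra h
            exact hfy (hsupp y h)
          rw [Metric.mem_closedBall, dist_zero_right] at hy
          have hxy : ε < ‖x - y‖ := by
            calc ε < ‖x‖ - 1 := hcase
              _ ≤ ‖x‖ - ‖y‖ := by linarith
              _ ≤ ‖x - y‖ := norm_sub_norm_le _ _
          have hφ0 : φ (ε⁻¹ • (x - y)) = 0 := by
            by_contra h
            have hmem := hφ_supp h
            rw [Metric.mem_closedBall, dist_zero_right, norm_smul, norm_inv,
              Real.norm_of_nonneg hε.le] at hmem
            have h2 : 1 < ε⁻¹ * ‖x - y‖ := by
              rw [← div_eq_inv_mul, lt_div_iff₀ hε]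
              linarith
            linarith
          rw [hφ0, mul_zero, zero_smul]
      simp only [this, integral_zero]
    simp [hzero]
  · -- large ε : use the cancellation
    have hε2 : 2 ≤ ε := by linarith
    have hεpos : (0:ℝ) < ε := hε
    set c : ℝ := (ε ^ d)⁻¹ * φ (ε⁻¹ • x) with hc
    have hint1 : Integrable (fun y => ((ε ^ d)⁻¹ * φ (ε⁻¹ • (x - y))) • f y) := by
      have hm : AEStronglyMeasurable
          (fun y => (((ε ^ d)⁻¹ * φ (ε⁻¹ • (x - y)) : ℝ) : ℂ)) volume := by
        apply Continuous.aestronglyMeasurable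
        apply Continuous.comp Complex.continuous_ofReal
        exact (continuous_const.mul (hφc.comp (by fun_prop)))
      have hb : ∃ C, ∀ y, ‖(((ε ^ d)⁻¹ * φ (ε⁻¹ • (x - y)) : ℝ) : ℂ)‖ ≤ C := by
        obtain ⟨P, hP⟩ := (hL.continuous.bounded_above_of_compact_support
          (HasCompactSupport.of_support_subset_isCompact (isCompact_closedBall _ _) hφ_supp))
        refine ⟨(ε ^ d)⁻¹ * P, fun y => ?_⟩
        rw [Complex.norm_real, norm_mul,
          Real.norm_of_nonneg (by positivity : (0:ℝ) ≤ (ε ^ d)⁻¹)]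
        have h2 : (0:ℝ) ≤ (ε ^ d)⁻¹ := by positivity
        exact mul_le_mul_of_nonneg_left (hP _) h2
      have := hint.bdd_mul hm (ae_of_all _ hb.choose_spec)
      apply this.congr
      filter_upwards with y
      simp [Complex.real_smul, mul_comm]
    have hint2 : Integrable (fun y => c • f y) := hint.smul c
    have hrepr : convPhi φ f ε x
        = ∫ y, (((ε ^ d)⁻¹ * (φ (ε⁻¹ • (x - y)) - φ (ε⁻¹ • x))) • f y) := by
      have h1 : ∫ y, c • f y = 0 := by
        rw [integral_smul, hmean0, smul_zero]
      rw [convPhi, ← sub_zero (∫ y, ((ε ^ d)⁻¹ * φ (ε⁻¹ • (x - y))) • f y), ← h1,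
        ← integral_sub hint1 hint2]
      congr 1
      funext y
      rw [← sub_smul, hc]
      ring_nf
    have hbound : ‖convPhi φ f ε x‖ ≤ (L : ℝ) * (∫ y, ‖f y‖) * (2 / (1 + ‖x‖)) ^ (d + 1) := by
      rw [hrepr]
      have hptwise : ∀ y, ‖(((ε ^ d)⁻¹ * (φ (ε⁻¹ • (x - y)) - φ (ε⁻¹ • x))) • f y)‖
          ≤ (L : ℝ) * (2 / (1 + ‖x‖)) ^ (d + 1) * ‖f y‖ := by
        intro y
        by_cases hfy : f y = 0
        · simp [hfy]
        · have hy : ‖y‖ ≤ 1 := by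
            by_contra h
            exact hfy (hsupp y (by
              rw [Metric.mem_closedBall, dist_zero_right]; exact h))
          rw [norm_smul, norm_mul]
          have hlip : ‖φ (ε⁻¹ • (x - y)) - φ (ε⁻¹ • x)‖ ≤ (L : ℝ) * (ε⁻¹ * ‖y‖) := by
            have := hL.dist_le_mul (ε⁻¹ • (x - y)) (ε⁻¹ • x)
            rw [Real.dist_eq] at this
            rw [Real.norm_eq_abs]
            refine le_trans this ?_
            rw [dist_eq_norm, ← smul_sub, norm_smul, norm_inv, Real.norm_of_nonneg hεpos.le]
            have : x - y - x = -y := by abel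
            rw [this, norm_neg]
          have hεbnd : ε⁻¹ ≤ 2 / (1 + ‖x‖) := by
            have h1 : (1 + ‖x‖) / 2 ≤ ‖x‖ - 1 := by linarith
            have h2 : (1 + ‖x‖) / 2 ≤ ε := le_trans h1 hcase
            calc ε⁻¹ ≤ ((1 + ‖x‖) / 2)⁻¹ := inv_anti₀ (by linarith) h2
              _ = 2 / (1 + ‖x‖) := by rw [inv_div]
          calc ‖(ε ^ d)⁻¹‖ * ‖φ (ε⁻¹ • (x - y)) - φ (ε⁻¹ • x)‖ * ‖f y‖
              ≤ (ε ^ d)⁻¹ * ((L : ℝ) * (ε⁻¹ * ‖y‖)) * ‖f y‖ := by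
                rw [Real.norm_of_nonneg (by positivity)]
                gcongr
            _ ≤ (ε ^ d)⁻¹ * ((L : ℝ) * (ε⁻¹ * 1)) * ‖f y‖ := by
                gcongr
            _ = (L : ℝ) * (ε⁻¹ ^ (d + 1)) * ‖f y‖ := by
                rw [mul_one, pow_succ, inv_pow]
                ring
            _ ≤ (L : ℝ) * (2 / (1 + ‖x‖)) ^ (d + 1) * ‖f y‖ := by
                gcongr
      calc ‖∫ y, (((ε ^ d)⁻¹ * (φ (ε⁻¹ • (x - y)) - φ (ε⁻¹ • x))) • f y)‖
          ≤ ∫ y, (L : ℝ) * (2 / (1 + ‖x‖)) ^ (d + 1) * ‖f y‖ := by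
            apply norm_integral_le_of_norm_le ((hint.norm.const_mul _))
            filter_upwards with y
            exact hptwise y
        _ = (L : ℝ) * (∫ y, ‖f y‖) * (2 / (1 + ‖x‖)) ^ (d + 1) := by
            rw [integral_const_mul]
            ring
    rw [← ENNReal.ofReal_coe_nnreal, coe_nnnorm]
    exact ENNReal.ofReal_le_ofReal hbound

lemma logPlus_nonneg (u : ℝ) : 0 ≤ logPlus u := le_max_right _ _

lemma log_le_logPlus (u : ℝ) : Real.log u ≤ logPlus u := le_max_left _ _

lemma one_sub_inv_le_log {t : ℝ} (ht : 0 < t) : 1 - t⁻¹ ≤ Real.log t := by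
  have h := Real.log_le_sub_one_of_pos (inv_pos.mpr ht)
  rw [Real.log_inv] at h
  linarith

lemma harmonic_le (n : ℕ) : ∑ k ∈ Finset.range n, (1:ℝ)/(k+1) ≤ 2 * Real.log (n + 1) := by
  induction n with
  | zero => simp
  | succ n ih =>
    rw [Finset.sum_range_succ]
    have hpos : (0:ℝ) < n + 1 := by positivity
    have hpos2 : (0:ℝ) < n + 2 := by positivity
    have hlog : 1 - ((n+2:ℝ)/(n+1))⁻¹ ≤ Real.log ((n+2:ℝ)/(n+1)) :=
      one_sub_inv_le_log (by positivity)
    rw [Real.log_div hpos2.ne' hpos.ne', inv_div] at hlog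
    have h1 : 1 - (n+1:ℝ)/(n+2) = 1/(n+2) := by
      field_simp
      ring
    rw [h1] at hlog
    have key : (1:ℝ)/(n+1) ≤ 2 * (Real.log (n+2) - Real.log (n+1)) := by
      have h2 : (1:ℝ)/(n+1) ≤ 2 * (1/(n+2)) := by
        rw [div_le_iff₀ hpos, show (2:ℝ) * (1/(n+2)) = 2/(n+2) by ring,
          div_mul_eq_mul_div, le_div_iff₀ hpos2]
        nlinarith
      linarith
    have hcast : (((n:ℕ)+1:ℕ):ℝ) + 1 = (n:ℝ) + 2 := by push_cast; ring
    rw [hcast]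
    calc ∑ k ∈ Finset.range n, (1:ℝ)/(k+1) + (1:ℝ)/((n:ℝ)+1)
        ≤ 2 * Real.log ((n:ℝ)+1) + 2 * (Real.log ((n:ℝ)+2) - Real.log ((n:ℝ)+1)) := by
          exact add_le_add ih key
      _ = 2 * Real.log ((n:ℝ)+2) := by ring

lemma log_e_add_pow_ge (k : ℕ) : Real.log 2 / 2 * (k + 1) ≤ Real.log (Real.exp 1 + 2 ^ k) := by
  have h2 : (0:ℝ) < 2 ^ k := by positivity
  have hbig : (2:ℝ)^k ≤ Real.exp 1 + 2^k := by
    have := Real.exp_pos 1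
    linarith
  have h1 : Real.log ((2:ℝ)^k) ≤ Real.log (Real.exp 1 + 2^k) := Real.log_le_log h2 hbig
  rw [Real.log_pow] at h1
  have he : (1:ℝ) ≤ Real.log (Real.exp 1 + 2^k) := by
    have : Real.exp 1 ≤ Real.exp 1 + 2^k := by linarith
    calc (1:ℝ) = Real.log (Real.exp 1) := (Real.log_exp 1).symm
      _ ≤ Real.log (Real.exp 1 + 2^k) := Real.log_le_log (Real.exp_pos 1) this
  have hlog2 : Real.log 2 ≤ 1 := by
    have := Real.log_le_sub_one_of_pos (by norm_num : (0:ℝ) < 2)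
    linarith
  have hlog2pos : 0 < Real.log 2 := Real.log_pos (by norm_num)
  nlinarith

lemma sum_invlog_le (n : ℕ) :
    ∑ k ∈ Finset.range n, 1 / Real.log (Real.exp 1 + 2 ^ k)
      ≤ 4 / Real.log 2 * Real.log (n + 1) := by
  have hlog2pos : 0 < Real.log 2 := Real.log_pos (by norm_num)
  have hterm : ∀ k : ℕ, 1 / Real.log (Real.exp 1 + 2 ^ k) ≤ 2 / Real.log 2 * (1 / (k+1)) := by
    intro k
    have hk := log_e_add_pow_ge k
    have hpos : (0:ℝ) < Real.log 2 / 2 * (k + 1) := by positivity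
    have h2 : 0 < Real.log (Real.exp 1 + 2 ^ k) := lt_of_lt_of_le hpos hk
    rw [div_le_iff₀ h2]
    have hrw : 2 / Real.log 2 * (1 / ((k:ℝ)+1)) * Real.log (Real.exp 1 + 2 ^ k)
        = (Real.log 2 / 2 * ((k:ℝ)+1))⁻¹ * Real.log (Real.exp 1 + 2 ^ k) := by
      rw [mul_inv, inv_div, div_eq_mul_inv, one_div]
    rw [hrw, ← div_eq_inv_mul, le_div_iff₀ hpos]
    calc 1 * (Real.log 2 / 2 * ((k:ℝ)+1)) = Real.log 2 / 2 * ((k:ℝ)+1) := one_mul _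
      _ ≤ Real.log (Real.exp 1 + 2 ^ k) := hk
  calc ∑ k ∈ Finset.range n, 1 / Real.log (Real.exp 1 + 2 ^ k)
      ≤ ∑ k ∈ Finset.range n, 2 / Real.log 2 * (1 / (k+1)) :=
        Finset.sum_le_sum (fun k _ => hterm k)
    _ = 2 / Real.log 2 * ∑ k ∈ Finset.range n, (1:ℝ)/(k+1) := by
        rw [Finset.mul_sum]
    _ ≤ 2 / Real.log 2 * (2 * Real.log (n+1)) := by
        have := harmonic_le n
        gcongr
    _ = 4 / Real.log 2 * Real.log (n + 1) := by ring

lemma exists_dyadic {v : ℝ} (hv : 1 < v) : ∃ n : ℕ, 2 ^ n < v ∧ v ≤ 2 ^ (n + 1) := by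
  have hex : ∃ m : ℕ, v ≤ 2 ^ (m + 1) := by
    obtain ⟨m, hm⟩ := pow_unbounded_of_one_lt v (by norm_num : (1:ℝ) < 2)
    exact ⟨m, le_trans hm.le (by
      apply pow_le_pow_right₀ (by norm_num : (1:ℝ) ≤ 2)
      omega)⟩
  classical
  let n := Nat.find hex
  refine ⟨n, ?_, Nat.find_spec hex⟩
  rcases Nat.eq_zero_or_pos n with h0 | hpos
  · rw [h0]
    simpa using hv
  · obtain ⟨m, hm⟩ := Nat.exists_eq_succ_of_ne_zero hpos.ne'
    have := Nat.find_min hex (m := m) (by omega)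
    rw [not_le] at this
    calc (2:ℝ)^n = 2^(m+1) := by rw [hm]
      _ < v := this

lemma log_one_add_le {w : ℝ} (hw : 0 ≤ w) : Real.log (1 + w) ≤ Real.log 2 + logPlus w := by
  rcases le_or_gt w 1 with h | h
  · calc Real.log (1 + w) ≤ Real.log 2 := Real.log_le_log (by linarith) (by linarith)
      _ ≤ Real.log 2 + logPlus w := by linarith [logPlus_nonneg w]
  · calc Real.log (1 + w) ≤ Real.log (2 * w) := Real.log_le_log (by linarith) (by linarith)
      _ = Real.log 2 + Real.log w := Real.log_mul (by norm_num) (by linarith)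
      _ ≤ Real.log 2 + logPlus w := by linarith [log_le_logPlus w]

lemma tsum_w_le {c₀ : ℝ} (hc₀ : 0 < c₀) (u : ℝ) (hu : 0 ≤ u) :
    (∑' k : ℕ, if ENNReal.ofReal ((2:ℝ)^k / c₀) < ENNReal.ofReal u
        then ENNReal.ofReal (1 / Real.log (Real.exp 1 + 2^k)) else 0)
      ≤ ENNReal.ofReal ((4 / Real.log 2) *
          (Real.log (1/Real.log 2 + |Real.log c₀|/Real.log 2 + 2) + Real.log 2
            + logPlus (logPlus u))) := by
  have hlog2pos : 0 < Real.log 2 := Real.log_pos (by norm_num)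
  set C₅ : ℝ := 1/Real.log 2 + |Real.log c₀|/Real.log 2 + 2 with hC₅
  clear_value C₅
  have hC₅2 : 2 ≤ C₅ := by
    have h1 : 0 ≤ 1/Real.log 2 := by positivity
    have h2 : 0 ≤ |Real.log c₀|/Real.log 2 := by positivity
    linarith
  rcases le_or_gt (c₀ * u) 1 with hsmall | hbig
  · have hzero : ∀ k : ℕ, (if ENNReal.ofReal ((2:ℝ)^k / c₀) < ENNReal.ofReal u
        then ENNReal.ofReal (1 / Real.log (Real.exp 1 + 2^k)) else (0:ℝ≥0∞)) = 0 := by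
      intro k
      rw [if_neg]
      intro h
      rw [ENNReal.ofReal_lt_ofReal_iff_of_nonneg (by positivity)] at h
      rw [div_lt_iff₀ hc₀] at h
      have h1 : (1:ℝ) ≤ 2^k := one_le_pow₀ (by norm_num)
      nlinarith
    rw [tsum_congr hzero, tsum_zero]
    exact zero_le
  · obtain ⟨K, hK1, hK2⟩ := exists_dyadic hbig
    have hu0 : 0 < u := by nlinarith
    have hvanish : ∀ k ∉ Finset.range (K+1),
        (if ENNReal.ofReal ((2:ℝ)^k / c₀) < ENNReal.ofReal u
          then ENNReal.ofReal (1 / Real.log (Real.exp 1 + 2^k)) else (0:ℝ≥0∞)) = 0 := by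
      intro k hk
      rw [Finset.mem_range, not_lt] at hk
      rw [if_neg]
      rw [not_lt]
      apply ENNReal.ofReal_le_ofReal
      rw [le_div_iff₀ hc₀]
      calc u * c₀ = c₀ * u := mul_comm _ _
        _ ≤ 2^(K+1) := hK2
        _ ≤ 2^k := by
          apply pow_le_pow_right₀ (by norm_num : (1:ℝ) ≤ 2) hk
    rw [tsum_eq_sum hvanish]
    have hsum1 : ∑ k ∈ Finset.range (K+1),
        (if ENNReal.ofReal ((2:ℝ)^k / c₀) < ENNReal.ofReal u
          then ENNReal.ofReal (1 / Real.log (Real.exp 1 + 2^k)) else (0:ℝ≥0∞))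
        ≤ ∑ k ∈ Finset.range (K+1), ENNReal.ofReal (1 / Real.log (Real.exp 1 + 2^k)) := by
      apply Finset.sum_le_sum
      intro k _
      split_ifs
      · exact le_refl _
      · exact zero_le
    have hsum2 : ∑ k ∈ Finset.range (K+1), ENNReal.ofReal (1 / Real.log (Real.exp 1 + 2^k))
        = ENNReal.ofReal (∑ k ∈ Finset.range (K+1), 1 / Real.log (Real.exp 1 + 2^k)) := by
      rw [ENNReal.ofReal_sum_of_nonneg]
      intro k _
      exact (one_div_pos.mpr (loge2k_pos k)).le
    refine le_trans hsum1 ?_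
    rw [hsum2]
    apply ENNReal.ofReal_le_ofReal
    have hKb : (K:ℝ) + 2 ≤ C₅ * (1 + logPlus u) := by
      have hlogs : (K:ℝ) * Real.log 2 ≤ |Real.log c₀| + logPlus u := by
        have h1 : Real.log ((2:ℝ)^K) < Real.log (c₀ * u) :=
          Real.log_lt_log (by positivity) hK1
        rw [Real.log_pow, Real.log_mul hc₀.ne' hu0.ne'] at h1
        have h2 : Real.log c₀ ≤ |Real.log c₀| := le_abs_self _
        have h3 : Real.log u ≤ logPlus u := log_le_logPlus u
        push_cast at h1 ⊢
        linarith
      have hK' : (K:ℝ) ≤ (|Real.log c₀| + logPlus u) / Real.log 2 := by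
        rw [le_div_iff₀ hlog2pos]
        exact hlogs
      have hlp : 0 ≤ logPlus u := logPlus_nonneg u
      have e1 : (|Real.log c₀| + logPlus u) / Real.log 2
          = |Real.log c₀|/Real.log 2 + logPlus u * (1/Real.log 2) := by
        field_simp
      have e2 : 1/Real.log 2 ≤ C₅ := by
        have : 0 ≤ |Real.log c₀|/Real.log 2 := by positivity
        linarith
      have e3 : |Real.log c₀|/Real.log 2 + 2 ≤ C₅ := by
        have : 0 ≤ 1/Real.log 2 := by positivity
        linarith
      have e4 : logPlus u * (1/Real.log 2) ≤ logPlus u * C₅ :=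
        mul_le_mul_of_nonneg_left e2 hlp
      rw [e1] at hK'
      nlinarith
    calc ∑ k ∈ Finset.range (K+1), 1 / Real.log (Real.exp 1 + 2^k)
        ≤ 4 / Real.log 2 * Real.log ((K+1 : ℕ) + 1) := sum_invlog_le (K+1)
      _ ≤ 4 / Real.log 2 * (Real.log C₅ + Real.log 2 + logPlus (logPlus u)) := by
          gcongr 4 / Real.log 2 * ?_
          have hcast : (((K+1 : ℕ)):ℝ) + 1 = (K:ℝ) + 2 := by push_cast; ring
          rw [hcast]
          calc Real.log ((K:ℝ) + 2) ≤ Real.log (C₅ * (1 + logPlus u)) :=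
              Real.log_le_log (by positivity) hKb
            _ = Real.log C₅ + Real.log (1 + logPlus u) := by
                rw [Real.log_mul (by linarith) (by nlinarith [logPlus_nonneg u])]
            _ ≤ Real.log C₅ + (Real.log 2 + logPlus (logPlus u)) := by
                have := log_one_add_le (logPlus_nonneg u)
                linarith
            _ = Real.log C₅ + Real.log 2 + logPlus (logPlus u) := by ring

/-- **Zygmund-type theorem for `H^log`.** If `f` is supported in the closed unit ball `B`,
has mean zero, and belongs to `L log log L (B)`, then `f ∈ H^log(ℝ^d)`. -/
theorem zygmund_type_Hlog {d : ℕ} (φ : EuclideanSpace ℝ (Fin d) → ℝ)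
    (hφ_nonneg : ∀ x, 0 ≤ φ x) (hφ_smooth : ContDiff ℝ (⊤ : ℕ∞) φ)
    (hφ_supp : Function.support φ ⊆ Metric.closedBall 0 1)
    (hφ_int : ∫ x, φ x = 1)
    (hφ_const : ∃ c : ℝ, ∀ x : EuclideanSpace ℝ (Fin d), ‖x‖ ≤ 1 / 2 → φ x = c)
    (f : EuclideanSpace ℝ (Fin d) → ℂ) (hmeas : Measurable f) (hint : Integrable f)
    (hsupp : ∀ x, x ∉ Metric.closedBall (0 : EuclideanSpace ℝ (Fin d)) 1 → f x = 0)
    (hmean : ∫ y in Metric.closedBall (0 : EuclideanSpace ℝ (Fin d)) 1, f y = 0)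
    (hLLL : ∫⁻ x in Metric.closedBall (0 : EuclideanSpace ℝ (Fin d)) 1,
      ENNReal.ofReal (‖f x‖ * logPlus (logPlus ‖f x‖)) < ∞) :
    ∫⁻ x, ENNReal.ofReal (PsiFun x ((MPhi φ f x).toReal)) < ∞ := by
  rcases Nat.eq_zero_or_pos d with hd0 | hd
  · -- dimension 0 : the space is a single point and the convolution vanishes
    subst hd0
    haveI : Subsingleton (EuclideanSpace ℝ (Fin 0)) :=
      ⟨fun a b => by ext i; exact i.elim0⟩
    have hmean0 : ∫ y, f y = 0 := by
      rw [← MeasureTheory.setIntegral_eq_integral_of_forall_compl_eq_zero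
        (fun y hy => hsupp y hy)]
      exact hmean
    have hconv : ∀ (ε : ℝ) (x : EuclideanSpace ℝ (Fin 0)), convPhi φ f ε x = 0 := by
      intro ε x
      rw [convPhi]
      calc ∫ y, ((ε ^ 0)⁻¹ * φ (ε⁻¹ • (x - y))) • f y
          = ∫ y, ((ε ^ 0)⁻¹ * φ 0) • f y := by
            apply integral_congr_ae
            filter_upwards with y
            rw [Subsingleton.elim (ε⁻¹ • (x - y)) (0 : EuclideanSpace ℝ (Fin 0))]
        _ = ((ε ^ 0)⁻¹ * φ 0) • ∫ y, f y := integral_smul _ _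
        _ = 0 := by rw [hmean0, smul_zero]
    have hzero : ∀ x, ENNReal.ofReal (PsiFun x ((MPhi φ f x).toReal)) = 0 := by
      intro x
      have hM : MPhi φ f x = 0 := by
        apply le_antisymm _ zero_le
        apply iSup₂_le
        intro ε hε
        simp [hconv ε x]
      rw [hM, ENNReal.toReal_zero, PsiFun, zero_div, ENNReal.ofReal_zero]
    rw [lintegral_congr hzero, lintegral_zero]
    exact ENNReal.zero_lt_top
  · -- main case `0 < d`
    haveI : Nontrivial (EuclideanSpace ℝ (Fin d)) :=
      Module.nontrivial_of_finrank_pos (R := ℝ) (by rwa [finrank_euclideanSpace_fin])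
    -- constants attached to φ
    have hcs : HasCompactSupport φ :=
      HasCompactSupport.of_support_subset_isCompact (isCompact_closedBall _ _) hφ_supp
    obtain ⟨P₀, hP₀⟩ := hφ_smooth.continuous.bounded_above_of_compact_support hcs
    set P : ℝ := max P₀ 1 with hPdef
    have hP : 0 < P := lt_of_lt_of_le one_pos (le_max_right _ _)
    have hPb : ∀ z, |φ z| ≤ P := fun z => by
      calc |φ z| = ‖φ z‖ := (Real.norm_eq_abs _).symm
        _ ≤ P₀ := hP₀ z
        _ ≤ P := le_max_left _ _
    obtain ⟨L, hL⟩ := hφ_smooth.lipschitzWith_of_hasCompactSupport hcs (by simp)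
    set cφ : ℝ := 2 ^ d * P with hcφdef
    have hcφ1 : 1 ≤ cφ := by
      have h1 : (1:ℝ) ≤ 2 ^ d := one_le_pow₀ (by norm_num)
      have h2 : 1 ≤ P := le_max_right _ _
      nlinarith
    have hcφpos : 0 < cφ := lt_of_lt_of_le one_pos hcφ1
    set Cφ : ℝ≥0∞ := ENNReal.ofReal cφ with hCφdef
    have hCφ0 : Cφ ≠ 0 := (ENNReal.ofReal_pos.mpr hcφpos).ne'
    have hCφtop : Cφ ≠ ∞ := ENNReal.ofReal_ne_top
    -- the majorant maximal function
    set g : EuclideanSpace ℝ (Fin d) → ℝ≥0∞ := fun y => (‖f y‖₊ : ℝ≥0∞) with hgdef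
    have hgmeas : Measurable g := hmeas.nnnorm.coe_nnreal_ennreal
    have hgof : ∀ y, g y = ENNReal.ofReal ‖f y‖ := fun y =>
      (ofReal_norm (f y)).symm
    set Mx : EuclideanSpace ℝ (Fin d) → ℝ≥0∞ := MopE g with hMxdef
    have hMxmeas : Measurable Mx := measurable_MopE hgmeas
    have hNle : ∀ x, MPhi φ f x ≤ Cφ * Mx x := MPhi_le_MopE φ f P hP hPb hφ_supp
    -- volume of the unit ball
    set V₁ : ℝ≥0∞ := volume (Metric.ball (0 : EuclideanSpace ℝ (Fin d)) 1) with hV₁def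
    have hV₁0 : V₁ ≠ 0 := (measure_ball_pos volume 0 one_pos).ne'
    have hV₁top : V₁ ≠ ∞ := measure_ball_lt_top.ne
    set v : ℝ := V₁.toReal with hvdef
    have hv0 : 0 < v := ENNReal.toReal_pos hV₁0 hV₁top
    set I₁ : ℝ := ∫ y, ‖f y‖ with hI₁def
    have hI₁0 : 0 ≤ I₁ := integral_nonneg (fun y => norm_nonneg _)
    set c₀ : ℝ := 2 * cφ * v with hc₀def
    have hc₀pos : 0 < c₀ := by positivity
    -- dyadic levels
    set tk : ℕ → ℝ≥0∞ := fun k => ENNReal.ofReal (2 ^ k / cφ) with htkdef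
    set Sk : ℕ → Set (EuclideanSpace ℝ (Fin d)) := fun k => {x | tk k < Mx x} with hSkdef
    have hSkmeas : ∀ k, MeasurableSet (Sk k) := fun k =>
      measurableSet_lt measurable_const hMxmeas
    set bk : ℕ → ℝ≥0∞ :=
      fun k => ENNReal.ofReal (2 ^ (k+1) / Real.log (Real.exp 1 + 2 ^ k)) with hbkdef
    -- the three majorants
    set Far : EuclideanSpace ℝ (Fin d) → ℝ≥0∞ :=
      (Metric.closedBall (0 : EuclideanSpace ℝ (Fin d)) 3)ᶜ.indicator
        (fun x => ENNReal.ofReal ((L:ℝ) * I₁ * (2 / (1 + ‖x‖)) ^ (d+1))) with hFardef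
    set Half : EuclideanSpace ℝ (Fin d) → ℝ≥0∞ :=
      (Metric.closedBall (0 : EuclideanSpace ℝ (Fin d)) 3).indicator
        (fun _ => ENNReal.ofReal (1/2)) with hHalfdef
    set Dyad : EuclideanSpace ℝ (Fin d) → ℝ≥0∞ :=
      fun x => ∑' k, (Sk k).indicator (fun _ => bk k) x with hDyaddef
    -- pointwise estimate
    have hpt : ∀ x, ENNReal.ofReal (PsiFun x ((MPhi φ f x).toReal))
        ≤ Far x + Half x + Dyad x := by
      intro x
      set t : ℝ := (MPhi φ f x).toReal with htdef
      have ht0 : 0 ≤ t := ENNReal.toReal_nonneg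
      have hden1 : 1 ≤ Real.log (Real.exp 1 + t) := by
        calc (1:ℝ) = Real.log (Real.exp 1) := (Real.log_exp 1).symm
          _ ≤ Real.log (Real.exp 1 + t) := Real.log_le_log (Real.exp_pos 1) (by linarith)
      have hden2 : 1 ≤ Real.log (Real.exp 1 + ‖x‖) := by
        have hn : 0 ≤ ‖x‖ := norm_nonneg x
        calc (1:ℝ) = Real.log (Real.exp 1) := (Real.log_exp 1).symm
          _ ≤ Real.log (Real.exp 1 + ‖x‖) := Real.log_le_log (Real.exp_pos 1) (by linarith)
      have hden : 0 < Real.log (Real.exp 1 + t) + Real.log (Real.exp 1 + ‖x‖) := by linarith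
      by_cases hx3 : x ∈ Metric.closedBall (0 : EuclideanSpace ℝ (Fin d)) 3
      · by_cases htop : MPhi φ f x = ∞
        · have ht' : t = 0 := by rw [htdef, htop, ENNReal.toReal_top]
          rw [PsiFun, ht', zero_div, ENNReal.ofReal_zero]
          exact zero_le
        rcases le_or_gt (MPhi φ f x) 1 with hsmall | hbig
        · have ht1 : t ≤ 1 := by
            have := ENNReal.toReal_mono ENNReal.one_ne_top hsmall
            simpa using this
          have hPsi : PsiFun x t ≤ 1/2 := by
            rw [PsiFun, div_le_div_iff₀ hden (by norm_num : (0:ℝ) < 2)]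
            nlinarith
          calc ENNReal.ofReal (PsiFun x t) ≤ ENNReal.ofReal (1/2) :=
              ENNReal.ofReal_le_ofReal hPsi
            _ = Half x := by rw [hHalfdef, Set.indicator_of_mem hx3]
            _ ≤ Far x + Half x := le_add_self
            _ ≤ Far x + Half x + Dyad x := le_add_right (le_refl _)
        · have hv1 : 1 < t := by
            have h := (ENNReal.toReal_lt_toReal ENNReal.one_ne_top htop).mpr hbig
            simpa using h
          obtain ⟨k, hk1, hk2⟩ := exists_dyadic hv1
          have hmem : x ∈ Sk k := by
            have h1 : ENNReal.ofReal (2 ^ k) < MPhi φ f x := by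
              rw [ENNReal.ofReal_lt_iff_lt_toReal (by positivity) htop]
              exact hk1
            have h2 : ENNReal.ofReal (2 ^ k) < Cφ * Mx x := lt_of_lt_of_le h1 (hNle x)
            have h3 : tk k = ENNReal.ofReal (2 ^ k) / Cφ := by
              rw [htkdef]
              exact ENNReal.ofReal_div_of_pos hcφpos
            show tk k < Mx x
            rw [h3, ENNReal.div_lt_iff (Or.inl hCφ0) (Or.inl hCφtop)]
            rwa [mul_comm]
          have hPsi : PsiFun x t ≤ 2 ^ (k+1) / Real.log (Real.exp 1 + 2 ^ k) := by
            rw [PsiFun]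
            apply div_le_div₀ (by positivity) hk2 (loge2k_pos k)
            have harg : Real.log (Real.exp 1 + 2 ^ k) ≤ Real.log (Real.exp 1 + t) := by
              apply Real.log_le_log
              · have := Real.exp_pos 1
                positivity
              · linarith [hk1.le]
            linarith
          calc ENNReal.ofReal (PsiFun x t) ≤ bk k := ENNReal.ofReal_le_ofReal hPsi
            _ = (Sk k).indicator (fun _ => bk k) x := by rw [Set.indicator_of_mem hmem]
            _ ≤ Dyad x := ENNReal.le_tsum k
            _ ≤ Far x + Half x + Dyad x := le_add_self
      · have hx3' : 3 ≤ ‖x‖ := by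
          rw [Metric.mem_closedBall, dist_zero_right, not_le] at hx3
          exact hx3.le
        have hfar := MPhi_far_bound φ f hφ_smooth.continuous hφ_supp L hL hint hsupp
          hmean hx3'
        have hfin : MPhi φ f x ≠ ∞ := ne_top_of_le_ne_top ENNReal.ofReal_ne_top hfar
        have ht : t ≤ (L:ℝ) * I₁ * (2 / (1 + ‖x‖)) ^ (d+1) := by
          have h := ENNReal.toReal_mono ENNReal.ofReal_ne_top hfar
          rwa [ENNReal.toReal_ofReal (by positivity)] at h
        have hPsi : PsiFun x t ≤ (L:ℝ) * I₁ * (2 / (1 + ‖x‖)) ^ (d+1) := by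
          rw [PsiFun]
          exact le_trans (div_le_self ht0 (by linarith)) ht
        calc ENNReal.ofReal (PsiFun x t)
            ≤ ENNReal.ofReal ((L:ℝ) * I₁ * (2 / (1 + ‖x‖)) ^ (d+1)) :=
              ENNReal.ofReal_le_ofReal hPsi
          _ = Far x := by rw [hFardef, Set.indicator_of_mem (Set.mem_compl hx3)]
          _ ≤ Far x + Half x := le_add_right (le_refl _)
          _ ≤ Far x + Half x + Dyad x := le_add_right (le_refl _)
    -- measurability of the majorants
    have hFarmeas : Measurable Far := by
      apply Measurable.indicator _ (measurableSet_closedBall.compl)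
      apply Measurable.ennreal_ofReal
      apply Continuous.measurable
      apply Continuous.mul continuous_const
      apply Continuous.pow
      apply Continuous.div continuous_const
      · exact continuous_const.add continuous_norm
      · intro x
        have := norm_nonneg x
        linarith
    have hHalfmeas : Measurable Half :=
      Measurable.indicator measurable_const measurableSet_closedBall
    -- the three integrals are finite
    have hFarInt : ∫⁻ x, Far x < ∞ := by
      have hip : Integrable (fun x : EuclideanSpace ℝ (Fin d) =>
          ((1:ℝ) + ‖x‖) ^ (-((d:ℝ)+1))) := by
        apply integrable_one_add_norm
        rw [finrank_euclideanSpace_fin]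
        linarith [lt_add_one (d:ℝ)]
      have hpw : ∀ x : EuclideanSpace ℝ (Fin d), Far x
          ≤ ENNReal.ofReal ((L:ℝ) * I₁ * 2 ^ (d+1))
            * (‖((1:ℝ) + ‖x‖) ^ (-((d:ℝ)+1))‖₊ : ℝ≥0∞) := by
        intro x
        have hx0 : (0:ℝ) < 1 + ‖x‖ := by have := norm_nonneg x; linarith
        have hrpow : ((1:ℝ) + ‖x‖) ^ (-((d:ℝ)+1)) = ((1 + ‖x‖) ^ (d+1))⁻¹ := by
          rw [← Real.rpow_natCast (1 + ‖x‖) (d+1), ← Real.rpow_neg hx0.le]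
          norm_num
        have heq : (L:ℝ) * I₁ * (2 / (1 + ‖x‖)) ^ (d+1)
            = ((L:ℝ) * I₁ * 2 ^ (d+1)) * ((1 + ‖x‖) ^ (d+1))⁻¹ := by
          rw [div_pow]
          field_simp
        calc Far x ≤ ENNReal.ofReal ((L:ℝ) * I₁ * (2 / (1 + ‖x‖)) ^ (d+1)) :=
            Set.indicator_le_self _ _ x
          _ = ENNReal.ofReal ((L:ℝ) * I₁ * 2 ^ (d+1))
              * ENNReal.ofReal (((1 + ‖x‖) ^ (d+1))⁻¹) := by
              rw [heq, ENNReal.ofReal_mul (mul_nonneg (mul_nonneg L.coe_nonneg hI₁0) (by positivity))]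
          _ = ENNReal.ofReal ((L:ℝ) * I₁ * 2 ^ (d+1))
              * (‖((1:ℝ) + ‖x‖) ^ (-((d:ℝ)+1))‖₊ : ℝ≥0∞) := by
              rw [hrpow]
              congr 1
              rw [← Real.enorm_eq_ofReal (by positivity), enorm_eq_nnnorm]
      calc ∫⁻ x, Far x
          ≤ ∫⁻ x, ENNReal.ofReal ((L:ℝ) * I₁ * 2 ^ (d+1))
            * (‖((1:ℝ) + ‖x‖) ^ (-((d:ℝ)+1))‖₊ : ℝ≥0∞) := lintegral_mono hpw
        _ = ENNReal.ofReal ((L:ℝ) * I₁ * 2 ^ (d+1))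
            * ∫⁻ x, (‖((1:ℝ) + ‖x‖) ^ (-((d:ℝ)+1))‖₊ : ℝ≥0∞) :=
            lintegral_const_mul' _ _ ENNReal.ofReal_ne_top
        _ < ∞ := ENNReal.mul_lt_top ENNReal.ofReal_lt_top hip.2
    have hHalfInt : ∫⁻ x, Half x < ∞ := by
      rw [hHalfdef, lintegral_indicator_const measurableSet_closedBall]
      exact ENNReal.mul_lt_top ENNReal.ofReal_lt_top measure_closedBall_lt_top
    -- the dyadic part
    have hDyadInt : ∫⁻ x, Dyad x < ∞ := by
      have hDint : ∫⁻ x, Dyad x = ∑' k, bk k * volume (Sk k) := by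
        rw [hDyaddef]
        rw [lintegral_tsum (fun k => (measurable_const.indicator (hSkmeas k)).aemeasurable)]
        congr 1
        funext k
        rw [lintegral_indicator_const (hSkmeas k)]
      rw [hDint]
      -- weak type estimate for each level
      set Gk : ℕ → EuclideanSpace ℝ (Fin d) → ℝ≥0∞ :=
        fun k y => if tk k / (2 * V₁) < g y then g y else 0 with hGkdef
      have hGkmeas : ∀ k, Measurable (Gk k) := fun k =>
        Measurable.ite (measurableSet_lt measurable_const hgmeas) hgmeas measurable_const
      set wk : ℕ → ℝ≥0∞ := fun k => ENNReal.ofReal (1 / Real.log (Real.exp 1 + 2 ^ k))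
        with hwkdef
      have hwk_top : ∀ k, wk k ≠ ∞ := fun k => ENNReal.ofReal_ne_top
      have hlevel : ∀ k, bk k * volume (Sk k)
          ≤ Cweak d * ENNReal.ofReal (4 * cφ) * (wk k * ∫⁻ y, Gk k y) := by
        intro k
        have htk0 : tk k ≠ 0 := by
          rw [htkdef]
          exact (ENNReal.ofReal_pos.mpr (by positivity)).ne'
        have htktop : tk k ≠ ∞ := ENNReal.ofReal_ne_top
        have hwref := MopE_weak_refined hd hgmeas htk0 htktop
        have hbk_rw : bk k * ((tk k / 2)⁻¹) = ENNReal.ofReal (4 * cφ) * wk k := by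
          have h2 : tk k / 2 = ENNReal.ofReal (2 ^ k / cφ / 2) := by
            rw [htkdef, ENNReal.ofReal_div_of_pos (by norm_num : (0:ℝ) < 2)]
            norm_num
          have hlogpos := loge2k_pos k
          have hkpos : (0:ℝ) < 2 ^ k / cφ / 2 := by positivity
          rw [hbkdef, h2, ← ENNReal.ofReal_inv_of_pos hkpos,
            ← ENNReal.ofReal_mul (div_nonneg (by positivity) hlogpos.le), hwkdef,
            ← ENNReal.ofReal_mul (by positivity)]
          congr 1
          field_simp
          ring
        calc bk k * volume (Sk k)
            ≤ bk k * (Cweak d * (∫⁻ y, Gk k y) / (tk k / 2)) := by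
              gcongr
          _ = Cweak d * (bk k * (tk k / 2)⁻¹) * (∫⁻ y, Gk k y) := by
              rw [div_eq_mul_inv]
              ring
          _ = Cweak d * (ENNReal.ofReal (4 * cφ) * wk k) * (∫⁻ y, Gk k y) := by
              rw [hbk_rw]
          _ = Cweak d * ENNReal.ofReal (4 * cφ) * (wk k * ∫⁻ y, Gk k y) := by
              ring
      -- summing up, using the `L log log L` hypothesis
      have htail : ∑' k, (wk k * ∫⁻ y, Gk k y)
          = ∫⁻ y, (∑' k, wk k * Gk k y) := by
        calc ∑' k, (wk k * ∫⁻ y, Gk k y) = ∑' k, ∫⁻ y, wk k * Gk k y :=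
            tsum_congr (fun k => (lintegral_const_mul' _ _ (hwk_top k)).symm)
          _ = ∫⁻ y, (∑' k, wk k * Gk k y) :=
            (lintegral_tsum (fun k => ((measurable_const.mul (hGkmeas k))).aemeasurable)).symm
      -- rewrite the truncation threshold
      have htv : ∀ k, tk k / (2 * V₁) = ENNReal.ofReal (2 ^ k / c₀) := by
        intro k
        have hV : V₁ = ENNReal.ofReal v := (ENNReal.ofReal_toReal hV₁top).symm
        have h2 : (2:ℝ≥0∞) = ENNReal.ofReal 2 := by norm_num
        rw [htkdef, hV, h2, ← ENNReal.ofReal_mul (by norm_num : (0:ℝ) ≤ 2),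
          ← ENNReal.ofReal_div_of_pos (by positivity)]
        congr 1
        rw [hc₀def]
        have h3 : cφ ≠ 0 := hcφpos.ne'
        have h4 : v ≠ 0 := hv0.ne'
        field_simp
      set logC₅ : ℝ := Real.log (1/Real.log 2 + |Real.log c₀|/Real.log 2 + 2) with hlogC₅
      have hlog2pos : 0 < Real.log 2 := Real.log_pos (by norm_num)
      have hlogC₅pos : 0 < logC₅ := by
        rw [hlogC₅]
        apply Real.log_pos
        have h1 : 0 ≤ 1/Real.log 2 := by positivity
        have h2 : 0 ≤ |Real.log c₀|/Real.log 2 := by positivity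
        linarith
      set B₂ : ℝ := 4 / Real.log 2 with hB₂
      have hB₂pos : 0 < B₂ := by rw [hB₂]; positivity
      set W₂ : ℝ := B₂ * (logC₅ + Real.log 2) with hW₂
      have hW₂pos : 0 < W₂ := by rw [hW₂]; positivity
      -- pointwise bound for the series
      have hptsum : ∀ y, (∑' k, wk k * Gk k y)
          ≤ ENNReal.ofReal (W₂ * ‖f y‖) + ENNReal.ofReal (B₂ * (‖f y‖ * logPlus (logPlus ‖f y‖))) := by
        intro y
        set u : ℝ := ‖f y‖ with hu
        have hu0 : 0 ≤ u := norm_nonneg _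
        have hrw : ∀ k, wk k * Gk k y
            = ENNReal.ofReal u * (if ENNReal.ofReal ((2:ℝ)^k / c₀) < ENNReal.ofReal u
                then ENNReal.ofReal (1 / Real.log (Real.exp 1 + 2^k)) else 0) := by
          intro k
          rw [hGkdef]
          simp only [htv k, hgof y, ← hu, hwkdef, mul_ite, mul_zero]
          split_ifs with h
          · rw [mul_comm]
          · rfl
        calc (∑' k, wk k * Gk k y)
            = ENNReal.ofReal u * ∑' k, (if ENNReal.ofReal ((2:ℝ)^k / c₀) < ENNReal.ofReal u
                then ENNReal.ofReal (1 / Real.log (Real.exp 1 + 2^k)) else 0) := by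
              rw [← ENNReal.tsum_mul_left]
              exact tsum_congr hrw
          _ ≤ ENNReal.ofReal u * ENNReal.ofReal (B₂ * (logC₅ + Real.log 2 + logPlus (logPlus u))) :=
              mul_le_mul_right (tsum_w_le hc₀pos u hu0) _
          _ = ENNReal.ofReal (W₂ * u + B₂ * (u * logPlus (logPlus u))) := by
              rw [← ENNReal.ofReal_mul hu0]
              congr 1
              rw [hW₂]
              ring
          _ ≤ ENNReal.ofReal (W₂ * u) + ENNReal.ofReal (B₂ * (u * logPlus (logPlus u))) :=
              ENNReal.ofReal_add_le
      -- the two integrals on the right are finite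
      have hIntNorm : ∫⁻ y, ENNReal.ofReal (W₂ * ‖f y‖) < ∞ := by
        have heq : ∀ y : EuclideanSpace ℝ (Fin d), ENNReal.ofReal (W₂ * ‖f y‖)
            = ENNReal.ofReal W₂ * (‖f y‖₊ : ℝ≥0∞) := by
          intro y
          rw [ENNReal.ofReal_mul hW₂pos.le, ofReal_norm, enorm_eq_nnnorm]
        calc ∫⁻ y, ENNReal.ofReal (W₂ * ‖f y‖)
            = ENNReal.ofReal W₂ * ∫⁻ y, (‖f y‖₊ : ℝ≥0∞) := by
              rw [← lintegral_const_mul' _ _ ENNReal.ofReal_ne_top]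
              exact lintegral_congr heq
          _ < ∞ := ENNReal.mul_lt_top ENNReal.ofReal_lt_top hint.2
      have hIntLLL : ∫⁻ y, ENNReal.ofReal (B₂ * (‖f y‖ * logPlus (logPlus ‖f y‖))) < ∞ := by
        have heq : (fun y => ENNReal.ofReal (‖f y‖ * logPlus (logPlus ‖f y‖)))
            = (Metric.closedBall (0 : EuclideanSpace ℝ (Fin d)) 1).indicator
              (fun y => ENNReal.ofReal (‖f y‖ * logPlus (logPlus ‖f y‖))) := by
          funext y
          by_cases hy : y ∈ Metric.closedBall (0 : EuclideanSpace ℝ (Fin d)) 1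
          · rw [Set.indicator_of_mem hy]
          · rw [Set.indicator_of_notMem hy, hsupp y hy]
            simp
        have h1 : ∫⁻ y, ENNReal.ofReal (‖f y‖ * logPlus (logPlus ‖f y‖)) < ∞ := by
          rw [heq, lintegral_indicator measurableSet_closedBall]
          exact hLLL
        calc ∫⁻ y, ENNReal.ofReal (B₂ * (‖f y‖ * logPlus (logPlus ‖f y‖)))
            = ENNReal.ofReal B₂ * ∫⁻ y, ENNReal.ofReal (‖f y‖ * logPlus (logPlus ‖f y‖)) := by
              rw [← lintegral_const_mul' _ _ ENNReal.ofReal_ne_top]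
              apply lintegral_congr
              intro y
              rw [← ENNReal.ofReal_mul hB₂pos.le]
          _ < ∞ := ENNReal.mul_lt_top ENNReal.ofReal_lt_top h1
      calc ∑' k, bk k * volume (Sk k)
          ≤ ∑' k, (Cweak d * ENNReal.ofReal (4 * cφ) * (wk k * ∫⁻ y, Gk k y)) :=
            ENNReal.tsum_le_tsum hlevel
        _ = Cweak d * ENNReal.ofReal (4 * cφ) * ∑' k, (wk k * ∫⁻ y, Gk k y) :=
            ENNReal.tsum_mul_left
        _ = Cweak d * ENNReal.ofReal (4 * cφ) * ∫⁻ y, (∑' k, wk k * Gk k y) := by rw [htail]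
        _ ≤ Cweak d * ENNReal.ofReal (4 * cφ)
            * ∫⁻ y, (ENNReal.ofReal (W₂ * ‖f y‖)
              + ENNReal.ofReal (B₂ * (‖f y‖ * logPlus (logPlus ‖f y‖)))) := by
            gcongr
            exact hptsum _
        _ = Cweak d * ENNReal.ofReal (4 * cφ)
            * ((∫⁻ y, ENNReal.ofReal (W₂ * ‖f y‖))
              + ∫⁻ y, ENNReal.ofReal (B₂ * (‖f y‖ * logPlus (logPlus ‖f y‖)))) := by
            rw [lintegral_add_left ((hmeas.norm.const_mul W₂).ennreal_ofReal)]
        _ < ∞ := by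
            apply ENNReal.mul_lt_top
            · exact ENNReal.mul_lt_top (Cweak_ne_top d).lt_top ENNReal.ofReal_lt_top
            · exact ENNReal.add_lt_top.mpr ⟨hIntNorm, hIntLLL⟩
    calc ∫⁻ x, ENNReal.ofReal (PsiFun x ((MPhi φ f x).toReal))
        ≤ ∫⁻ x, (Far x + Half x + Dyad x) := lintegral_mono hpt
      _ = (∫⁻ x, Far x) + (∫⁻ x, Half x) + (∫⁻ x, Dyad x) := by
          rw [lintegral_add_left (f := fun x => Far x + Half x) (hFarmeas.add hHalfmeas), lintegral_add_left hFarmeas]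
      _ < ∞ := by
          exact ENNReal.add_lt_top.mpr ⟨ENNReal.add_lt_top.mpr ⟨hFarInt, hHalfInt⟩, hDyadInt⟩
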